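/- arXiv:1207.4028 — 4 statements merged into one kernel-verified Lean document; each statement's English description precedes it below -/
import Mathlib

section
/- With ξ a P₀-Lévy process with exponent ψ₀, X independent of ξ with support in A, and P defined by dP/dP₀|_{G_t} = exp(Xξ_t − ψ₀(X)t), one has for purely imaginary α: E^P[exp(αξ_t) | X] = exp((ψ₀(α + X) − ψ₀(X)) t). Thus ξ carries conditional exponent ψ₀(α+X) − ψ₀(X) under P. -/
/-!
Under `P₀` the random variables `X` and `Y = ξ_t` are independent, so an integral of a function
of `(X, Y)` can be computed by integrating out `Y` with `X` frozen (Fubini on the product law).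
With `M` and `Φ` the real and complex moment generating functions of `Y`, this turns
`E₀[h(X) e^{XY}/M(X) · e^{βY}]` into `E₀[h(X) Φ(β + X)/M(X)]` for bounded `h` and imaginary `β`.
Taking `β = α, h = 1_B` and `β = 0, h = 1_B Φ(α + ·)/M` shows that `Φ(α + X)/M(X)` has the
set integrals over `{X ∈ B}` that characterise `E^P[e^{αY} | X]`. On the support `A` of `X`,
`M(X) = e^{ψ₀(X)t}` and `Φ(α + X) = e^{ψ₀(α + X)t}`.
-/

open MeasureTheory ProbabilityTheory Real NNReal
open scoped ENNReal Complex

theorem MeasureTheory.integrable_prod_of_integral_norm_le {α β E : Type*}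
    {mα : MeasurableSpace α} {mβ : MeasurableSpace β} [NormedAddCommGroup E]
    {μ : Measure α} {ν : Measure β} [IsFiniteMeasure μ] [SFinite ν] {f : α × β → E}
    (hf : AEStronglyMeasurable f (μ.prod ν))
    (hfi : ∀ᵐ x ∂μ, Integrable (fun y => f (x, y)) ν) {C : ℝ}
    (hC : ∀ᵐ x ∂μ, ∫ y, ‖f (x, y)‖ ∂ν ≤ C) :
    Integrable f (μ.prod ν) :=
  (integrable_prod_iff hf).2 ⟨hfi, .mono' (integrable_const C) hf.norm.integral_prod_right'
    (hC.mono fun _ hx => by rwa [norm_of_nonneg (integral_nonneg fun _ => norm_nonneg _)])⟩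

namespace ProbabilityTheory

section Independence

variable {Ω α β E : Type*} {mΩ : MeasurableSpace Ω} {mα : MeasurableSpace α}
  {mβ : MeasurableSpace β} [NormedAddCommGroup E] {μ : Measure Ω} [IsFiniteMeasure μ]
  {X : Ω → α} {Y : Ω → β}

theorem IndepFun.integrable_comp (hXY : IndepFun X Y μ) (hX : AEMeasurable X μ)
    (hY : AEMeasurable Y μ) {K : α → β → E}
    (hK : Integrable (Function.uncurry K) ((μ.map X).prod (μ.map Y))) :
    Integrable (fun ω => K (X ω) (Y ω)) μ := by
  rw [← (indepFun_iff_map_prod_eq_prod_map_map hX hY).mp hXY] at hK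
  exact (integrable_map_measure hK.1 (hX.prodMk hY)).mp hK

theorem IndepFun.integral_comp_eq_integral_integral [NormedSpace ℝ E] (hXY : IndepFun X Y μ)
    (hX : AEMeasurable X μ) (hY : AEMeasurable Y μ) {K : α → β → E}
    (hK : Integrable (Function.uncurry K) ((μ.map X).prod (μ.map Y))) :
    ∫ ω, K (X ω) (Y ω) ∂μ = ∫ ω, ∫ ω', K (X ω) (Y ω') ∂μ ∂μ := by
  have hmap := (indepFun_iff_map_prod_eq_prod_map_map hX hY).mp hXY
  have hfiber : (fun x => ∫ y, K x y ∂(μ.map Y)) =ᵐ[μ.map X] fun x => ∫ ω', K x (Y ω') ∂μ :=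
    hK.prod_right_ae.mono fun x hx => integral_map hY hx.1
  calc ∫ ω, K (X ω) (Y ω) ∂μ = ∫ p, Function.uncurry K p ∂(μ.map fun ω => (X ω, Y ω)) :=
        (integral_map (hX.prodMk hY) (hmap ▸ hK.1)).symm
    _ = ∫ x, ∫ y, K x y ∂(μ.map Y) ∂(μ.map X) := by rw [hmap, integral_prod _ hK]; rfl
    _ = ∫ x, ∫ ω', K x (Y ω') ∂μ ∂(μ.map X) := integral_congr_ae hfiber
    _ = _ := integral_map hX (hK.integral_prod_left.1.congr hfiber)

end Independence

variable {Ω : Type*} {mΩ : MeasurableSpace Ω} {μ : Measure Ω} {X Y : Ω → ℝ} {ω : Ω}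

theorem measurable_complexMGF [SFinite μ] (hY : Measurable Y) : Measurable (complexMGF Y μ) :=
  (show Measurable fun p : ℂ × Ω => cexp (p.1 * Y p.2) by fun_prop).stronglyMeasurable
    |>.integral_prod_right' |>.measurable

theorem measurable_mgf [SFinite μ] (hY : Measurable Y) : Measurable (mgf Y μ) :=
  re_complexMGF_ofReal' (X := Y) (μ := μ) ▸ ((measurable_complexMGF hY).comp
    Complex.measurable_ofReal).re

theorem measurableSet_integrableExpSet : MeasurableSet (integrableExpSet Y μ) :=
  convex_integrableExpSet.ordConnected.measurableSet

/-- The density `exp (X ξ_t - ψ₀(X) t)` with `e^{ψ₀(x) t}` written as the moment generating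
function it equals on `A`: unlike `ψ₀`, that is measurable. -/
noncomputable def esscherDensity (X Y : Ω → ℝ) (μ : Measure Ω) (ω : Ω) : ℝ :=
  rexp (X ω * Y ω) / mgf Y μ (X ω)

theorem measurable_esscherDensity [SFinite μ] (hX : Measurable X) (hY : Measurable Y) :
    Measurable (esscherDensity X Y μ) := by
  have := (measurable_mgf (μ := μ) hY).comp hX
  unfold esscherDensity; fun_prop

theorem esscherDensity_mul_cexp_mul (h : ℝ → ℂ) (β : ℂ) (ω : Ω) :
    (esscherDensity X Y μ ω : ℂ) * (h (X ω) * cexp (β * Y ω))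
      = h (X ω) * cexp ((β + X ω) * Y ω) / mgf Y μ (X ω) := by
  simp only [esscherDensity, Complex.ofReal_div, Complex.ofReal_exp, Complex.ofReal_mul,
    add_mul, Complex.exp_add]
  ring

variable [IsProbabilityMeasure μ]

theorem esscherDensity_nonneg (hXexp : X ω ∈ integrableExpSet Y μ) :
    0 ≤ esscherDensity X Y μ ω :=
  div_nonneg (exp_nonneg _) (mgf_pos hXexp).le

theorem integrable_uncurry_mul_cexp_div_mgf (hX : Measurable X) (hY : Measurable Y)
    (hXexp : ∀ᵐ ω ∂μ, X ω ∈ integrableExpSet Y μ) {h : ℝ → ℂ} (hh : Measurable h) {C : ℝ}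
    (hC : ∀ᵐ ω ∂μ, ‖h (X ω)‖ ≤ C) {β : ℂ} (hβ : β.re = 0) :
    Integrable (Function.uncurry fun x y : ℝ => h x * cexp ((β + x) * y) / mgf Y μ x)
      ((μ.map X).prod (μ.map Y)) := by
  have hXexp' : ∀ᵐ x ∂μ.map X, x ∈ integrableExpSet Y μ :=
    (ae_map_iff hX.aemeasurable measurableSet_integrableExpSet).2 hXexp
  have hC' : ∀ᵐ x ∂μ.map X, ‖h x‖ ≤ C :=
    (ae_map_iff hX.aemeasurable (measurableSet_le hh.norm measurable_const)).2 hC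
  refine integrable_prod_of_integral_norm_le ?_ ?_ (C := C) ?_
  · have := measurable_mgf (μ := μ) hY
    exact Measurable.aestronglyMeasurable (by fun_prop)
  · filter_upwards [hXexp'] with x hx
    have hexp : Integrable (fun y : ℝ => cexp ((β + x) * y)) (μ.map Y) :=
      (integrable_map_measure (g := fun y : ℝ => cexp ((β + x) * y)) (by fun_prop)
        hY.aemeasurable).2 <|
        integrable_cexp_mul_of_re_mem_integrableExpSet hY.aemeasurable (by simpa [hβ] using hx)
    exact (hexp.const_mul (h x)).div_const (mgf Y μ x : ℂ)
  · filter_upwards [hXexp', hC'] with x hx hCx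
    have hM := mgf_pos hx
    calc ∫ y, ‖h x * cexp ((β + x) * y) / mgf Y μ x‖ ∂μ.map Y
        = ∫ ω, ‖h x‖ * rexp (x * Y ω) / mgf Y μ x ∂μ := by
          rw [integral_map hY.aemeasurable (by fun_prop)]
          simp [Complex.norm_exp, hβ, abs_of_pos hM]
      _ = ‖h x‖ := by
          rw [integral_div, integral_const_mul]; exact mul_div_cancel_right₀ _ hM.ne'
      _ ≤ C := hCx

theorem integrable_esscherDensity_mul (hXY : IndepFun X Y μ) (hX : Measurable X)
    (hY : Measurable Y) (hXexp : ∀ᵐ ω ∂μ, X ω ∈ integrableExpSet Y μ) {h : ℝ → ℂ}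
    (hh : Measurable h) {C : ℝ} (hC : ∀ᵐ ω ∂μ, ‖h (X ω)‖ ≤ C) {β : ℂ} (hβ : β.re = 0) :
    Integrable (fun ω => (esscherDensity X Y μ ω : ℂ) * (h (X ω) * cexp (β * Y ω))) μ := by
  simpa only [esscherDensity_mul_cexp_mul] using hXY.integrable_comp hX.aemeasurable
    hY.aemeasurable (integrable_uncurry_mul_cexp_div_mgf hX hY hXexp hh hC hβ)

theorem integral_esscherDensity_mul (hXY : IndepFun X Y μ) (hX : Measurable X)
    (hY : Measurable Y) (hXexp : ∀ᵐ ω ∂μ, X ω ∈ integrableExpSet Y μ) {h : ℝ → ℂ}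
    (hh : Measurable h) {C : ℝ} (hC : ∀ᵐ ω ∂μ, ‖h (X ω)‖ ≤ C) {β : ℂ} (hβ : β.re = 0) :
    ∫ ω, (esscherDensity X Y μ ω : ℂ) * (h (X ω) * cexp (β * Y ω)) ∂μ
      = ∫ ω, h (X ω) * (complexMGF Y μ (β + X ω) / mgf Y μ (X ω)) ∂μ := by
  simp_rw [esscherDensity_mul_cexp_mul]
  refine (hXY.integral_comp_eq_integral_integral hX.aemeasurable hY.aemeasurable
    (integrable_uncurry_mul_cexp_div_mgf hX hY hXexp hh hC hβ)).trans ?_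
  simp only [integral_div, integral_const_mul, complexMGF, mul_div_assoc]

theorem norm_complexMGF_add_div_mgf_le_one {α : ℂ} (hα : α.re = 0) {x : ℝ}
    (hx : x ∈ integrableExpSet Y μ) : ‖complexMGF Y μ (α + x) / mgf Y μ x‖ ≤ 1 := by
  have hM := mgf_pos hx
  rw [norm_div, Complex.norm_real, norm_of_nonneg hM.le, div_le_one hM]
  simpa [hα] using norm_complexMGF_le_mgf (X := Y) (μ := μ) (z := α + x)

theorem setIntegral_comap_withDensity_esscherDensity (hX : Measurable X) (hY : Measurable Y)
    (hXexp : ∀ᵐ ω ∂μ, X ω ∈ integrableExpSet Y μ) {B : Set ℝ} (hB : MeasurableSet B)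
    (F : Ω → ℂ) :
    ∫ ω in X ⁻¹' B, F ω ∂μ.withDensity (fun ω => ENNReal.ofReal (esscherDensity X Y μ ω))
      = ∫ ω, (esscherDensity X Y μ ω : ℂ) * (B.indicator 1 (X ω) * F ω) ∂μ := by
  rw [setIntegral_withDensity_eq_setIntegral_toReal_smul
      (measurable_esscherDensity hX hY).ennreal_ofReal
      (ae_of_all _ fun _ => ENNReal.ofReal_lt_top) _ (hX hB), ← integral_indicator (hX hB)]
  refine integral_congr_ae (hXexp.mono fun ω hω => ?_)
  by_cases hB : X ω ∈ B <;>
    simp [hB, ENNReal.toReal_ofReal (esscherDensity_nonneg hω), Complex.real_smul]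

theorem setIntegral_comap_withDensity_esscherDensity_complexMGF_div_mgf
    (hXY : IndepFun X Y μ) (hX : Measurable X) (hY : Measurable Y)
    (hXexp : ∀ᵐ ω ∂μ, X ω ∈ integrableExpSet Y μ) {α : ℂ} (hα : α.re = 0) {B : Set ℝ}
    (hB : MeasurableSet B) :
    ∫ ω in X ⁻¹' B, complexMGF Y μ (α + X ω) / mgf Y μ (X ω)
        ∂μ.withDensity (fun ω => ENNReal.ofReal (esscherDensity X Y μ ω))
      = ∫ ω in X ⁻¹' B, cexp (α * Y ω)
        ∂μ.withDensity (fun ω => ENNReal.ofReal (esscherDensity X Y μ ω)) := by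
  set r : ℝ → ℂ := fun x => complexMGF Y μ (α + x) / mgf Y μ x
  have hr : Measurable (B.indicator r) := by
    have := measurable_complexMGF (μ := μ) hY
    have := measurable_mgf (μ := μ) hY
    exact Measurable.indicator (by fun_prop) hB
  have hr_le : ∀ᵐ ω ∂μ, ‖B.indicator r (X ω)‖ ≤ 1 := hXexp.mono fun _ hω =>
    (norm_indicator_le_norm_self _ _).trans (norm_complexMGF_add_div_mgf_le_one hα hω)
  have h1_le : ∀ᵐ ω ∂μ, ‖B.indicator (1 : ℝ → ℂ) (X ω)‖ ≤ 1 :=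
    ae_of_all _ fun _ => (norm_indicator_le_norm_self _ _).trans_eq norm_one
  rw [setIntegral_comap_withDensity_esscherDensity hX hY hXexp hB,
    setIntegral_comap_withDensity_esscherDensity hX hY hXexp hB]
  calc ∫ ω, (esscherDensity X Y μ ω : ℂ) * (B.indicator 1 (X ω) * r (X ω)) ∂μ
      = ∫ ω, (esscherDensity X Y μ ω : ℂ) * (B.indicator r (X ω) * cexp (0 * Y ω)) ∂μ := by
        congr with ω
        by_cases hB : X ω ∈ B <;> simp [hB]
    _ = ∫ ω, B.indicator r (X ω) * (complexMGF Y μ (0 + X ω) / mgf Y μ (X ω)) ∂μ :=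
        integral_esscherDensity_mul hXY hX hY hXexp hr hr_le rfl
    _ = ∫ ω, B.indicator 1 (X ω) * r (X ω) ∂μ := integral_congr_ae <| hXexp.mono fun ω hω => by
        dsimp only
        rw [zero_add, complexMGF_ofReal, div_self (by exact_mod_cast (mgf_pos hω).ne')]
        by_cases hB : X ω ∈ B <;> simp [hB]
    _ = ∫ ω, (esscherDensity X Y μ ω : ℂ) * (B.indicator 1 (X ω) * cexp (α * Y ω)) ∂μ :=
        (integral_esscherDensity_mul hXY hX hY hXexp (measurable_const.indicator hB) h1_le hα).symm

theorem condExp_cexp_mul_withDensity_esscherDensity (hXY : IndepFun X Y μ)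
    (hX : Measurable X) (hY : Measurable Y) (hXexp : ∀ᵐ ω ∂μ, X ω ∈ integrableExpSet Y μ)
    {α : ℂ} (hα : α.re = 0) :
    (μ.withDensity fun ω => ENNReal.ofReal (esscherDensity X Y μ ω))[
      fun ω => cexp (α * Y ω) | MeasurableSpace.comap X inferInstance]
      =ᵐ[μ.withDensity fun ω => ENNReal.ofReal (esscherDensity X Y μ ω)]
      fun ω => complexMGF Y μ (α + X ω) / mgf Y μ (X ω) := by
  set P := μ.withDensity fun ω => ENNReal.ofReal (esscherDensity X Y μ ω)
  have hr : Measurable fun x : ℝ => complexMGF Y μ (α + x) / mgf Y μ x := by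
    have := measurable_complexMGF (μ := μ) hY
    have := measurable_mgf (μ := μ) hY
    fun_prop
  have hP_fin : IsFiniteMeasure P := by
    have h1 := integrable_esscherDensity_mul hXY hX hY hXexp (h := fun _ => 1) measurable_const
      (C := 1) (by simp) (β := 0) rfl
    exact isFiniteMeasure_withDensity_ofReal (by simpa using h1.re.2)
  have hr_le : ∀ᵐ ω ∂P, ‖complexMGF Y μ (α + X ω) / mgf Y μ (X ω)‖ ≤ 1 :=
    (withDensity_absolutelyContinuous _ _).ae_le <|
      hXexp.mono fun _ hω => norm_complexMGF_add_div_mgf_le_one hα hω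
  refine (ae_eq_condExp_of_forall_setIntegral_eq hX.comap_le ?_ ?_ ?_
    (hr.comp (comap_measurable X)).aestronglyMeasurable).symm
  · refine .mono' (integrable_const 1) (by fun_prop) (ae_of_all _ fun ω => ?_)
    simp [Complex.norm_exp, hα]
  · exact fun _ _ _ =>
      (Integrable.mono' (integrable_const 1) (hr.comp hX).aestronglyMeasurable hr_le).integrableOn
  · rintro _ ⟨B, hB, rfl⟩ -
    exact setIntegral_comap_withDensity_esscherDensity_complexMGF_div_mgf hXY hX hY hXexp hα hB

end ProbabilityTheory

/-- With ξ a P₀-Lévy process with exponent ψ₀, X independent of ξ with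
support in A, and P defined by dP/dP₀|_{G_t} = exp(Xξ_t − ψ₀(X)t), one has for purely
imaginary α:  E^P[exp(αξ_t) | X] = exp((ψ₀(α + X) − ψ₀(X)) t). -/
theorem randomized_esscher_conditional_exponent
    {Ω : Type*} [m : MeasurableSpace Ω] (P₀ : Measure Ω) [IsProbabilityMeasure P₀]
    (ξ : ℝ≥0 → Ω → ℝ) (hξm : ∀ t, Measurable (ξ t))
    (X : Ω → ℝ) (hX : Measurable X)
    (A : Set ℝ) (hXA : ∀ᵐ ω ∂P₀, X ω ∈ A)
    (ψ₀ : ℂ → ℂ) (ψ₀r : ℝ → ℝ)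
    -- ψ₀ is real-valued on A, with real restriction ψ₀r
    (hreal : ∀ x ∈ A, ψ₀ (x : ℂ) = (ψ₀r x : ℂ))
    -- X is independent of the process under P₀
    (hindep : ∀ t : ℝ≥0, IndepFun X (ξ t) P₀)
    -- Lévy exponent of ξ under P₀ on A_ℂ = {w : Re w ∈ A}
    (hmgf : ∀ w : ℂ, w.re ∈ A → ∀ t : ℝ≥0,
      Integrable (fun ω => Complex.exp (w * (ξ t ω : ℂ))) P₀ ∧
      ∫ ω, Complex.exp (w * (ξ t ω : ℂ)) ∂P₀ = Complex.exp (ψ₀ w * ((t : ℝ) : ℂ)))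
    (t : ℝ≥0) (α : ℂ) (hα : α.re = 0) :
    (P₀.withDensity
        (fun ω => ENNReal.ofReal (Real.exp (X ω * ξ t ω - ψ₀r (X ω) * t))))[
      (fun ω => Complex.exp (α * (ξ t ω : ℂ))) | MeasurableSpace.comap X inferInstance]
      =ᵐ[P₀.withDensity
        (fun ω => ENNReal.ofReal (Real.exp (X ω * ξ t ω - ψ₀r (X ω) * t)))]
      fun ω => Complex.exp ((ψ₀ (α + (X ω : ℂ)) - ψ₀ ((X ω : ℂ))) * ((t : ℝ) : ℂ)) := by
  have hcomplexMGF : ∀ w : ℂ, w.re ∈ A → complexMGF (ξ t) P₀ w = cexp (ψ₀ w * t) :=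
    fun w hw => (hmgf w hw t).2
  have hmgf_eq : ∀ x ∈ A, mgf (ξ t) P₀ x = rexp (ψ₀r x * t) := fun x hx => by
    apply Complex.ofReal_injective
    rw [← complexMGF_ofReal, hcomplexMGF x (by simpa using hx), hreal x hx]
    push_cast; rfl
  have hXexp : ∀ᵐ ω ∂P₀, X ω ∈ integrableExpSet (ξ t) P₀ := hXA.mono fun ω hω => by
    simpa [integrableExpSet, ← Complex.ofReal_mul, Complex.exp_ofReal_re]
      using (hmgf (X ω) (by simpa) t).1.re
  have hdensity : (fun ω => ENNReal.ofReal (rexp (X ω * ξ t ω - ψ₀r (X ω) * t)))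
      =ᵐ[P₀] fun ω => ENNReal.ofReal (esscherDensity X (ξ t) P₀ ω) :=
    hXA.mono fun ω hω => by simp only [esscherDensity, hmgf_eq _ hω, Real.exp_sub]
  rw [withDensity_congr_ae hdensity]
  refine (condExp_cexp_mul_withDensity_esscherDensity (hindep t) hX (hξm t) hXexp hα).trans ?_
  filter_upwards [(withDensity_absolutelyContinuous _ _).ae_le hXA] with ω hω
  rw [hcomplexMGF _ (by simpa [hα] using hω), hmgf_eq _ hω, Complex.ofReal_exp, Complex.ofReal_mul,
    ← hreal _ hω, ← Complex.exp_sub, sub_mul]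
end

section
/- Bayes formula for Lévy information: if X has a priori distribution π and ξ_t = x under the information process with fiducial exponent ψ₀, then the conditional distribution of X given F_t = σ(ξ_s, s ≤ t) is π_t(dx) = exp(xξ_t − ψ₀(x)t) π(dx) / ∫ exp(yξ_t − ψ₀(y)t) π(dy). -/
/-!
Under `P₀` the message `X` is independent of `F_t`, so conditioning a functional `Φ(ξ_t, X)` on
`F_t` freezes `ξ_t` and integrates `X` out against its law `π`:
`E₀[Φ(ξ_t, X) | F_t] = ∫ Φ(ξ_t, x) π(dx)`. Feeding this into the Kallianpur–Striebel formula
`E[f(X) | F_t] = E₀[f(X) ρ | F_t] / E₀[ρ | F_t]` for the density `ρ = exp(X ξ_t − ψ₀(X) t)`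
gives the posterior as a ratio of two `π`-integrals.
-/

open MeasureTheory ProbabilityTheory Real NNReal

lemma div_mul_cancel_of_abs_le_mul {a b C : ℝ} (h : |a| ≤ C * b) : a / b * b = a := by
  rcases eq_or_ne b 0 with rfl | hb
  · simpa [eq_comm] using h
  · exact div_mul_cancel₀ a hb

lemma abs_div_le_abs_of_abs_le_mul {a b C : ℝ} (hb : 0 ≤ b) (h : |a| ≤ C * b) :
    |a / b| ≤ |C| := by
  rcases hb.eq_or_lt with rfl | hb
  · simp
  · rw [abs_div, abs_of_pos hb, div_le_iff₀ hb]
    exact h.trans (mul_le_mul_of_nonneg_right (le_abs_self C) hb.le)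

section KallianpurStriebel

variable {Ω : Type*} {m m₀ : MeasurableSpace Ω} {μ : Measure Ω}

lemma setIntegral_withDensity_ofReal {ρ : Ω → ℝ} (hρm : Measurable ρ) (hρ : 0 ≤ ρ)
    (g : Ω → ℝ) {s : Set Ω} (hs : MeasurableSet s) :
    ∫ ω in s, g ω ∂μ.withDensity (fun ω => ENNReal.ofReal (ρ ω)) = ∫ ω in s, g ω * ρ ω ∂μ := by
  refine (setIntegral_withDensity_eq_setIntegral_smul hρm.real_toNNReal g hs).trans ?_
  simp only [NNReal.smul_def, Real.coe_toNNReal _ (hρ _), smul_eq_mul, mul_comm]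

lemma abs_condExp_mul_ae_le {ρ Z : Ω → ℝ} (hρ : 0 ≤ ρ) (hρi : Integrable ρ μ)
    (hZ : AEStronglyMeasurable Z μ) {C : ℝ} (hZC : ∀ᵐ ω ∂μ, ‖Z ω‖ ≤ C) :
    ∀ᵐ ω ∂μ, |μ[Z * ρ | m] ω| ≤ C * μ[ρ | m] ω := by
  have hZρ : Integrable (Z * ρ) μ := hρi.bdd_mul hZ hZC
  have hle : |Z * ρ| ≤ᵐ[μ] C • ρ := by
    filter_upwards [hZC] with ω hω
    simp only [Pi.abs_apply, Pi.mul_apply, Pi.smul_apply, smul_eq_mul, abs_mul,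
      abs_of_nonneg (hρ ω)]
    exact mul_le_mul_of_nonneg_right hω (hρ ω)
  filter_upwards [abs_condExp_ae_le_condExp_abs (m := m) (Z * ρ),
    condExp_mono (m := m) hZρ.abs (hρi.smul C) hle, condExp_smul (m := m) C ρ]
    with ω habs hmono hsmul
  simpa [hsmul] using habs.trans hmono

theorem condExp_withDensity_ae_eq_div (hm : m ≤ m₀) [SigmaFinite (μ.trim hm)] {ρ Z : Ω → ℝ}
    (hρm : Measurable ρ) (hρ : 0 ≤ ρ) (hρi : Integrable ρ μ) (hZ : AEStronglyMeasurable Z μ)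
    {C : ℝ} (hZC : ∀ᵐ ω ∂μ, ‖Z ω‖ ≤ C) :
    (μ.withDensity fun ω => ENNReal.ofReal (ρ ω))[Z | m]
      =ᵐ[μ.withDensity fun ω => ENNReal.ofReal (ρ ω)] μ[Z * ρ | m] / μ[ρ | m] := by
  set P := μ.withDensity fun ω => ENNReal.ofReal (ρ ω)
  have : IsFiniteMeasure P := isFiniteMeasure_withDensity_ofReal hρi.2
  have hP : P ≪ μ := withDensity_absolutelyContinuous _ _
  set h := μ[Z * ρ | m] / μ[ρ | m]
  have hhm : StronglyMeasurable[m] h := stronglyMeasurable_condExp.div stronglyMeasurable_condExp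
  have hdom := abs_condExp_mul_ae_le (m := m) hρ hρi hZ hZC
  have hden : 0 ≤ᵐ[μ] μ[ρ | m] := condExp_nonneg (.of_forall hρ)
  have hhC : ∀ᵐ ω ∂μ, ‖h ω‖ ≤ |C| := by
    filter_upwards [hdom, hden] with ω hω h0
    exact abs_div_le_abs_of_abs_le_mul h0 hω
  have hhρ : Integrable (h * ρ) μ := hρi.bdd_mul (hhm.mono hm).aestronglyMeasurable hhC
  have hZρ : Integrable (Z * ρ) μ := hρi.bdd_mul hZ hZC
  refine (ae_eq_condExp_of_forall_setIntegral_eq hm (.of_bound (hZ.mono_ac hP) C (hP.ae_le hZC))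
    (fun s _ _ => (Integrable.of_bound (hhm.mono hm).aestronglyMeasurable _
      (hP.ae_le hhC)).integrableOn) (fun s hs _ => ?_) hhm.aestronglyMeasurable).symm
  calc ∫ ω in s, h ω ∂P = ∫ ω in s, h ω * ρ ω ∂μ :=
        setIntegral_withDensity_ofReal hρm hρ h (hm s hs)
    _ = ∫ ω in s, μ[h * ρ | m] ω ∂μ := (setIntegral_condExp hm hhρ hs).symm
    _ = ∫ ω in s, μ[Z * ρ | m] ω ∂μ := by
      refine setIntegral_congr_ae (hm s hs) ?_
      filter_upwards [condExp_mul_of_stronglyMeasurable_left hhm hhρ hρi, hdom] with ω hpull hω _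
      rw [hpull, Pi.mul_apply]
      -- where `μ[ρ | m]` vanishes so does `μ[Z * ρ | m]`, so the junk value `_ / 0 = 0` is harmless
      exact div_mul_cancel_of_abs_le_mul hω
    _ = ∫ ω in s, Z ω * ρ ω ∂μ := setIntegral_condExp hm hZρ hs
    _ = ∫ ω in s, Z ω ∂P := (setIntegral_withDensity_ofReal hρm hρ Z (hm s hs)).symm

end KallianpurStriebel

section Freezing

variable {Ω β E : Type*} {m mΩ : MeasurableSpace Ω} [MeasurableSpace β] [mE : MeasurableSpace E]
  {μ : Measure Ω} [IsFiniteMeasure μ] {X : Ω → E} {Y : Ω → β}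

lemma integrable_prod_map_of_indepFun (hY : Measurable Y) (hX : Measurable X)
    (hXY : IndepFun Y X μ) {Φ : β × E → ℝ} (hΦ : StronglyMeasurable Φ)
    (hint : Integrable (fun ω => Φ (Y ω, X ω)) μ) :
    Integrable Φ ((μ.map Y).prod (μ.map X)) := by
  rw [← (indepFun_iff_map_prod_eq_prod_map_map hY.aemeasurable hX.aemeasurable).mp hXY]
  exact (integrable_map_measure hΦ.aestronglyMeasurable (hY.prodMk hX).aemeasurable).mpr hint

lemma integrable_integral_comp_of_indepFun (hY : Measurable Y) (hX : Measurable X)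
    (hXY : IndepFun Y X μ) {Φ : β × E → ℝ} (hΦ : StronglyMeasurable Φ)
    (hint : Integrable (fun ω => Φ (Y ω, X ω)) μ) :
    Integrable (fun ω => ∫ x, Φ (Y ω, x) ∂(μ.map X)) μ :=
  (integrable_map_measure hΦ.integral_prod_right'.aestronglyMeasurable hY.aemeasurable).mp
    (integrable_prod_map_of_indepFun hY hX hXY hΦ hint).integral_prod_left

lemma integral_comp_of_indepFun (hY : Measurable Y) (hX : Measurable X)
    (hXY : IndepFun Y X μ) {Φ : β × E → ℝ} (hΦ : StronglyMeasurable Φ)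
    (hint : Integrable (fun ω => Φ (Y ω, X ω)) μ) :
    ∫ ω, Φ (Y ω, X ω) ∂μ = ∫ ω, ∫ x, Φ (Y ω, x) ∂(μ.map X) ∂μ := by
  calc ∫ ω, Φ (Y ω, X ω) ∂μ = ∫ p, Φ p ∂(μ.map fun ω => (Y ω, X ω)) :=
        (integral_map (hY.prodMk hX).aemeasurable hΦ.aestronglyMeasurable).symm
    _ = ∫ p, Φ p ∂((μ.map Y).prod (μ.map X)) := by
        rw [(indepFun_iff_map_prod_eq_prod_map_map hY.aemeasurable hX.aemeasurable).mp hXY]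
    _ = ∫ y, ∫ x, Φ (y, x) ∂(μ.map X) ∂(μ.map Y) :=
        integral_prod _ (integrable_prod_map_of_indepFun hY hX hXY hΦ hint)
    _ = ∫ ω, ∫ x, Φ (Y ω, x) ∂(μ.map X) ∂μ :=
        integral_map hY.aemeasurable hΦ.integral_prod_right'.aestronglyMeasurable

theorem condExp_comp_indep_ae_eq_integral (hm : m ≤ mΩ)
    (hY : Measurable[m] Y) (hX : Measurable X) (hindep : Indep (MeasurableSpace.comap X mE) m μ)
    {Φ : β × E → ℝ} (hΦ : StronglyMeasurable Φ) (hint : Integrable (fun ω => Φ (Y ω, X ω)) μ) :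
    μ[fun ω => Φ (Y ω, X ω) | m] =ᵐ[μ] fun ω => ∫ x, Φ (Y ω, x) ∂(μ.map X) := by
  have hXY : IndepFun Y X μ := by
    rw [IndepFun_iff_Indep]
    exact indep_of_indep_of_le_left hindep.symm hY.comap_le
  refine (ae_eq_condExp_of_forall_setIntegral_eq hm hint
    (fun s _ _ =>
      (integrable_integral_comp_of_indepFun (hY.mono hm le_rfl) hX hXY hΦ hint).integrableOn)
    (fun s hs _ => ?_) ?_).symm
  · -- Carry `𝟙_s` as an extra `m`-measurable coordinate of `Y`, so that it is frozen too.
    have hindicator (f : Ω → ℝ) : s.indicator f = fun ω => s.indicator 1 ω * f ω := by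
      ext ω
      by_cases h : ω ∈ s <;> simp [h]
    have hY' : Measurable[m] fun ω => (Y ω, s.indicator (1 : Ω → ℝ) ω) :=
      hY.prodMk (measurable_const.indicator hs)
    have hXY' : IndepFun (fun ω => (Y ω, s.indicator (1 : Ω → ℝ) ω)) X μ := by
      rw [IndepFun_iff_Indep]
      exact indep_of_indep_of_le_left hindep.symm hY'.comap_le
    have hΦ' : StronglyMeasurable fun p : (β × ℝ) × E => p.1.2 * Φ (p.1.1, p.2) :=
      (measurable_fst.snd.stronglyMeasurable).mul
        (hΦ.comp_measurable (measurable_fst.fst.prodMk measurable_snd))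
    have hint' := hint.indicator (hm s hs)
    rw [hindicator] at hint'
    rw [← integral_indicator (hm s hs), ← integral_indicator (hm s hs), hindicator,
      hindicator fun ω => Φ (Y ω, X ω)]
    simp_rw [← integral_const_mul]
    exact (integral_comp_of_indepFun (hY'.mono hm le_rfl) hX hXY' hΦ' hint').symm
  · exact (hΦ.integral_prod_right'.comp_measurable hY).aestronglyMeasurable

end Freezing

/-- Bayes formula for Lévy information: if X has a priori distribution π,
then the conditional distribution of X given F_t under the information measure
P = exp(Xξ_t − ψ₀(X)t)·P₀ is π_t(dx) = exp(xξ_t − ψ₀(x)t) π(dx) / ∫ exp(yξ_t − ψ₀(y)t) π(dy),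
stated as an identity of conditional expectations for bounded measurable test functions. -/
theorem levy_information_bayes
    {Ω : Type*} [m : MeasurableSpace Ω] (P₀ : Measure Ω) [IsProbabilityMeasure P₀]
    (ξ : ℝ≥0 → Ω → ℝ) (hξm : ∀ t, StronglyMeasurable (ξ t))
    (X : Ω → ℝ) (hX : Measurable X)
    (ψ₀ : ℝ → ℝ) (hψ₀ : Measurable ψ₀)
    (t : ℝ≥0)
    -- X is independent of the process ξ up to time t under P₀
    (hindep : Indep (MeasurableSpace.comap X inferInstance)
      (MeasureTheory.Filtration.natural ξ hξm t) P₀)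
    -- integrability of the change-of-measure density
    (hint : Integrable (fun ω => Real.exp (X ω * ξ t ω - ψ₀ (X ω) * t)) P₀)
    (f : ℝ → ℝ) (hf : Measurable f) (hfb : ∃ C, ∀ x, |f x| ≤ C) :
    (P₀.withDensity
        (fun ω => ENNReal.ofReal (Real.exp (X ω * ξ t ω - ψ₀ (X ω) * t))))[
      (fun ω => f (X ω)) | MeasureTheory.Filtration.natural ξ hξm t]
      =ᵐ[P₀.withDensity
        (fun ω => ENNReal.ofReal (Real.exp (X ω * ξ t ω - ψ₀ (X ω) * t)))]
      fun ω =>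
        (∫ x, f x * Real.exp (x * ξ t ω - ψ₀ x * t) ∂(P₀.map X))
          / ∫ x, Real.exp (x * ξ t ω - ψ₀ x * t) ∂(P₀.map X) := by
  obtain ⟨C, hC⟩ := hfb
  have hG := (Filtration.natural ξ hξm).le t
  have hξG := (Filtration.stronglyAdapted_natural hξm t).measurable
  have hφ : Measurable fun p : ℝ × ℝ => exp (p.2 * p.1 - ψ₀ p.2 * t) := by fun_prop
  have hfX : ∀ᵐ ω ∂P₀, ‖f (X ω)‖ ≤ C := .of_forall fun ω => hC (X ω)
  have hbayes := condExp_withDensity_ae_eq_div hG (hφ.comp ((hξG.mono hG le_rfl).prodMk hX))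
    (fun ω => (exp_pos _).le) hint (hf.comp hX).aestronglyMeasurable hfX
  have hnum := condExp_comp_indep_ae_eq_integral hG hξG hX hindep
    (Φ := fun p => f p.2 * exp (p.2 * p.1 - ψ₀ p.2 * t))
    ((hf.comp measurable_snd).mul hφ).stronglyMeasurable
    (hint.bdd_mul (hf.comp hX).aestronglyMeasurable hfX)
  have hden := condExp_comp_indep_ae_eq_integral hG hξG hX hindep hφ.stronglyMeasurable hint
  exact hbayes.trans ((withDensity_absolutelyContinuous _ _).ae_eq (hnum.div hden))
end

section
/- Gamma information: let γ be a standard gamma process with rate m (E[exp(αγ_t)] = (1−α)^{−mt} for Re α < 1), and X an independent random variable with X < 1 a.s. Then ξ_t = γ_t/(1−X) satisfies E[exp(αξ_t)|X] = exp((ψ₀(α+X) − ψ₀(X))t) for purely imaginary α, where ψ₀(α) = −m ln(1−α); this reduces to the identity −m ln(1 − α/(1−X)) = −m ln(1−(X+α)) + m ln(1−X). -/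
/-!
Conditionally on `X = x`, the variable `ξ_t = γ_t / (1 - x)` is a rescaled gamma variable, so by
independence its conditional characteristic function is the moment generating function of `γ_t`
evaluated at `α / (1 - x)`, namely `(1 - α / (1 - x)) ^ (-m t)`. Writing
`1 - α / (1 - x) = (1 - (x + α)) / (1 - x)` and dividing by the positive real `1 - x` splits the
logarithm into `log (1 - (x + α)) - log (1 - x)`, which is `(ψ₀(α + x) - ψ₀(x)) / (-m)`.
-/

open MeasureTheory ProbabilityTheory Real NNReal

namespace ProbabilityTheory

variable {Ω β 𝓨 F : Type*} {mΩ : MeasurableSpace Ω} {mβ : MeasurableSpace β}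
  [MeasurableSpace 𝓨] [StandardBorelSpace 𝓨] [Nonempty 𝓨]
  [NormedAddCommGroup F] [NormedSpace ℝ F] [CompleteSpace F]
  {μ : Measure Ω} [IsFiniteMeasure μ] {X : Ω → β} {Y : Ω → 𝓨}

lemma IndepFun.condDistrib_ae_eq_const (hXY : IndepFun X Y μ) (hX : AEMeasurable X μ)
    (hY : AEMeasurable Y μ) :
    condDistrib Y X μ =ᵐ[μ.map X] Kernel.const β (μ.map Y) := by
  refine condDistrib_ae_eq_of_measure_eq_compProd X hY ?_
  rw [Measure.compProd_const]
  exact (indepFun_iff_map_prod_eq_prod_map_map hX hY).mp hXY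

theorem condExp_comp_prodMk_ae_eq_integral_of_indepFun {f : β × 𝓨 → F} (hX : Measurable X)
    (hY : AEMeasurable Y μ) (hXY : IndepFun X Y μ)
    (hf : Integrable f (μ.map fun a => (X a, Y a))) :
    μ[fun a => f (X a, Y a) | mβ.comap X] =ᵐ[μ] fun a => ∫ y, f (X a, y) ∂(μ.map Y) := by
  filter_upwards [condExp_prod_ae_eq_integral_condDistrib' hX hY hf,
    ae_of_ae_map hX.aemeasurable (hXY.condDistrib_ae_eq_const hX.aemeasurable hY)] with a ha hXa
  rw [ha, hXa, Kernel.const_apply]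

end ProbabilityTheory

lemma one_sub_div_one_sub {K : Type*} [Field K] {a x : K} (hx : 1 - x ≠ 0) :
    1 - a / (1 - x) = (1 - (x + a)) / (1 - x) := by
  field_simp
  ring

namespace Complex

lemma log_div_ofReal {r : ℝ} (hr : 0 < r) {z : ℂ} (hz : z ≠ 0) : log (z / r) = log z - log r := by
  rw [div_eq_mul_inv, ← ofReal_inv, log_mul_ofReal _ (inv_pos.mpr hr) _ hz, Real.log_inv,
    ofReal_neg, ofReal_log hr.le]
  ring

lemma one_sub_div_one_sub_cpow {x : ℝ} (hx : x < 1) {α : ℂ} (hα : 1 - ((x : ℂ) + α) ≠ 0)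
    (s : ℂ) : (1 - α / (1 - x)) ^ s = exp ((log (1 - ((x : ℂ) + α)) - log (1 - x)) * s) := by
  have hpos : (0 : ℝ) < 1 - x := sub_pos.mpr hx
  have hx' : (1 : ℂ) - x = ((1 - x : ℝ) : ℂ) := by push_cast; ring
  have hne : ((1 - x : ℝ) : ℂ) ≠ 0 := ofReal_ne_zero.mpr hpos.ne'
  rw [one_sub_div_one_sub (hx' ▸ hne), hx', cpow_def_of_ne_zero (div_ne_zero hα hne),
    log_div_ofReal hpos hα]

lemma re_div_one_sub_ofReal {α : ℂ} (hα : α.re = 0) (x : ℝ) : (α / (1 - x)).re = 0 := by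
  rw [← ofReal_one, ← ofReal_sub, div_ofReal_re, hα, zero_div]

lemma one_sub_ofReal_add_ne_zero {α : ℂ} (hα : α.re = 0) {x : ℝ} (hx : x < 1) :
    1 - ((x : ℂ) + α) ≠ 0 := by
  intro h
  have := congrArg re h
  simp only [sub_re, one_re, add_re, ofReal_re, hα, add_zero, zero_re] at this
  linarith

end Complex

theorem gamma_information_general
    {Ω : Type*} [mΩ : MeasurableSpace Ω] (P : Measure Ω) [IsProbabilityMeasure P]
    (m : ℝ)
    (γ : ℝ≥0 → Ω → ℝ) (hγm : ∀ t, Measurable (γ t))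
    -- standard gamma process with rate m: E[exp(α γ_t)] = (1−α)^{−mt} for Re α < 1
    (hmgf : ∀ (α : ℂ), α.re < 1 → ∀ t : ℝ≥0,
      Integrable (fun ω => Complex.exp (α * (γ t ω : ℂ))) P ∧
      ∫ ω, Complex.exp (α * (γ t ω : ℂ)) ∂P = ((1 : ℂ) - α) ^ ((-(m * t) : ℝ) : ℂ))
    (X : Ω → ℝ) (hX : Measurable X) (hX1 : ∀ᵐ ω ∂P, X ω < 1)
    -- X is independent of the gamma process
    (hindep : Indep (MeasurableSpace.comap X inferInstance)
      (⨆ t : ℝ≥0, MeasurableSpace.comap (γ t) inferInstance) P)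
    (ξ : ℝ≥0 → Ω → ℝ) (hξ : ∀ t ω, ξ t ω = γ t ω / (1 - X ω)) :
    -- conditional exponent ψ₀(α+X) − ψ₀(X), with ψ₀(w) = −m log(1−w)
    (∀ (α : ℂ), α.re = 0 → ∀ t : ℝ≥0,
      P[(fun ω => Complex.exp (α * (ξ t ω : ℂ))) | MeasurableSpace.comap X inferInstance]
        =ᵐ[P] fun ω =>
          Complex.exp ((((-m : ℂ) * Complex.log (1 - (α + (X ω : ℂ))))
            - ((-m : ℂ) * Complex.log (1 - (X ω : ℂ)))) * ((t : ℝ) : ℂ)))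
    -- the reduction identity
    ∧ (∀ x α : ℝ, x < 1 → x + α < 1 →
        -m * Real.log (1 - α / (1 - x))
          = -m * Real.log (1 - (x + α)) + m * Real.log (1 - x)) := by
  refine ⟨fun α hα t => ?_, fun x α hx hxα => ?_⟩
  · set f : ℝ × ℝ → ℂ := fun p => Complex.exp (α / (1 - p.1) * p.2)
    have hξf : (fun ω => Complex.exp (α * ξ t ω)) = fun ω => f (X ω, γ t ω) := by
      funext ω
      simp only [f, hξ]
      push_cast
      congr 1
      ring
    have hf_meas : Measurable f := by dsimp only [f]; fun_prop
    have hf : Integrable f (P.map fun ω => (X ω, γ t ω)) := by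
      refine .of_bound hf_meas.aestronglyMeasurable 1 (.of_forall fun p => le_of_eq ?_)
      simp [f, Complex.norm_exp, Complex.re_div_one_sub_ofReal hα]
    have hXγ : IndepFun X (γ t) P :=
      indep_of_indep_of_le_right hindep (le_iSup (fun u => MeasurableSpace.comap (γ u) _) t)
    rw [hξf]
    filter_upwards [condExp_comp_prodMk_ae_eq_integral_of_indepFun hX (hγm t).aemeasurable hXγ hf,
      hX1] with ω hω hXω
    have hmgf_at : ∫ ω', Complex.exp (α / (1 - X ω) * γ t ω') ∂P
        = (1 - α / (1 - X ω)) ^ ((-(m * t) : ℝ) : ℂ) :=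
      (hmgf _ (by rw [Complex.re_div_one_sub_ofReal hα]; exact one_pos) t).2
    rw [hω, integral_map (hγm t).aemeasurable (f := fun y => f (X ω, y))
      (hf_meas.comp measurable_prodMk_left).aestronglyMeasurable, hmgf_at,
      Complex.one_sub_div_one_sub_cpow hXω (Complex.one_sub_ofReal_add_ne_zero hα hXω), add_comm α]
    push_cast
    congr 1
    ring
  · rw [one_sub_div_one_sub (sub_pos.mpr hx).ne',
      Real.log_div (sub_pos.mpr hxα).ne' (sub_pos.mpr hx).ne']
    ring

/-- Gamma information: let γ be a standard gamma process with rate m and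
X independent with X < 1 a.s.  Then ξ_t = γ_t/(1−X) has conditional exponent
ψ₀(α+X) − ψ₀(X) where ψ₀(α) = −m ln(1−α); this reduces to the identity
−m ln(1 − α/(1−x)) = −m ln(1−(x+α)) + m ln(1−x). -/
theorem gamma_information
    {Ω : Type*} [mΩ : MeasurableSpace Ω] (P : Measure Ω) [IsProbabilityMeasure P]
    (m : ℝ) (hm : 0 < m)
    (γ : ℝ≥0 → Ω → ℝ) (hγm : ∀ t, Measurable (γ t))
    -- standard gamma process with rate m: E[exp(α γ_t)] = (1−α)^{−mt} for Re α < 1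
    (hmgf : ∀ (α : ℂ), α.re < 1 → ∀ t : ℝ≥0,
      Integrable (fun ω => Complex.exp (α * (γ t ω : ℂ))) P ∧
      ∫ ω, Complex.exp (α * (γ t ω : ℂ)) ∂P = ((1 : ℂ) - α) ^ ((-(m * t) : ℝ) : ℂ))
    (X : Ω → ℝ) (hX : Measurable X) (hX1 : ∀ᵐ ω ∂P, X ω < 1)
    -- X is independent of the gamma process
    (hindep : Indep (MeasurableSpace.comap X inferInstance)
      (⨆ t : ℝ≥0, MeasurableSpace.comap (γ t) inferInstance) P)
    (ξ : ℝ≥0 → Ω → ℝ) (hξ : ∀ t ω, ξ t ω = γ t ω / (1 - X ω)) :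
    -- conditional exponent ψ₀(α+X) − ψ₀(X), with ψ₀(w) = −m log(1−w)
    (∀ (α : ℂ), α.re = 0 → ∀ t : ℝ≥0,
      P[(fun ω => Complex.exp (α * (ξ t ω : ℂ))) | MeasurableSpace.comap X inferInstance]
        =ᵐ[P] fun ω =>
          Complex.exp ((((-m : ℂ) * Complex.log (1 - (α + (X ω : ℂ))))
            - ((-m : ℂ) * Complex.log (1 - (X ω : ℂ)))) * ((t : ℝ) : ℂ)))
    -- the reduction identity
    ∧ (∀ x α : ℝ, x < 1 → x + α < 1 →
        -m * Real.log (1 - α / (1 - x))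
          = -m * Real.log (1 - (x + α)) + m * Real.log (1 - x)) :=
  gamma_information_general (mΩ := mΩ) P m γ hγm hmgf X hX hX1 hindep ξ hξ
end

section
/- Linear gamma filter: let X = 1 − U where U is gamma-distributed with shape r > 1 and rate θ > 0, and let ξ_t be a gamma information process with rate m and message X. Then with Y = m/(1−X), the conditional expectation is E[Y | F_t] = (ξ_t + θ)/(t + τ) where τ = (r−1)/m; equivalently, the Bayes posterior integral identity ∫ (m/(1−x)) (1−x)^{mt} e^{xξ_t} π(dx) / ∫ (1−x)^{mt} e^{xξ_t} π(dx) = (ξ_t + θ)/(t + (r−1)/m) holds, where π is the law of X. -/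
/-!
In the variable `u = 1 - x` the posterior weight `u ^ (m * t) * exp ((1 - u) * ξ)` tilts the
Gamma(r, θ) law into Gamma(r + m t, θ + ξ), up to constants. The filter is `m` times the mean of
`u⁻¹` under that law, which the functional equation `Γ(s + 1) = s Γ(s)` evaluates as
`(θ + ξ) / (r + m t - 1)`.
-/

open MeasureTheory ProbabilityTheory Real Set

namespace ProbabilityTheory

variable {a r : ℝ}

lemma integral_gammaMeasure (ha : 0 < a) (hr : 0 < r) (f : ℝ → ℝ) :
    ∫ x, f x ∂gammaMeasure a r =
      ∫ x in Ioi 0, r ^ a / Gamma a * x ^ (a - 1) * exp (-(r * x)) * f x := by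
  rw [gammaMeasure, integral_withDensity_eq_integral_toReal_smul
    (f := gammaPDF a r) (measurable_gammaPDFReal a r).ennreal_ofReal
    (ae_of_all _ fun _ ↦ ENNReal.ofReal_lt_top)]
  simp only [gammaPDF, ENNReal.toReal_ofReal (gammaPDFReal_nonneg ha hr _), smul_eq_mul]
  rw [← setIntegral_eq_integral_of_forall_compl_eq_zero (s := Ici 0) fun x hx ↦ by
      simp [gammaPDFReal, show ¬ 0 ≤ x from hx], integral_Ici_eq_integral_Ioi]
  exact setIntegral_congr_fun measurableSet_Ioi fun x hx ↦ by
    simp [gammaPDFReal, le_of_lt (mem_Ioi.mp hx)]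

lemma integral_rpow_mul_exp_neg_mul_gammaMeasure {p s : ℝ} (ha : 0 < a) (hr : 0 < r)
    (hap : 0 < a + p) (hrs : 0 < r + s) :
    ∫ x, x ^ p * exp (-(s * x)) ∂gammaMeasure a r =
      r ^ a / Gamma a * ((1 / (r + s)) ^ (a + p) * Gamma (a + p)) := by
  rw [integral_gammaMeasure ha hr, ← integral_rpow_mul_exp_neg_mul_Ioi hap hrs,
    ← integral_const_mul]
  refine setIntegral_congr_fun measurableSet_Ioi fun x (hx : 0 < x) ↦ ?_
  rw [show a + p - 1 = (a - 1) + p by ring, rpow_add hx,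
    show -((r + s) * x) = -(r * x) + -(s * x) by ring, exp_add]
  ring

lemma integral_inv_mul_div_integral_gammaMeasure {p s : ℝ} (ha : 0 < a) (hr : 0 < r)
    (hap : 1 < a + p) (hrs : 0 < r + s) :
    (∫ x, x⁻¹ * (x ^ p * exp (-(s * x))) ∂gammaMeasure a r) /
        ∫ x, x ^ p * exp (-(s * x)) ∂gammaMeasure a r = (r + s) / (a + p - 1) := by
  have hnum : ∫ x, x⁻¹ * (x ^ p * exp (-(s * x))) ∂gammaMeasure a r =
      ∫ x, x ^ (p - 1) * exp (-(s * x)) ∂gammaMeasure a r := by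
    rw [integral_gammaMeasure ha hr, integral_gammaMeasure ha hr]
    refine setIntegral_congr_fun measurableSet_Ioi fun x (hx : 0 < x) ↦ ?_
    rw [rpow_sub_one hx.ne' p]
    ring
  have hΓ : Gamma (a + p) = (a + p - 1) * Gamma (a + (p - 1)) := by
    rw [show a + p = a + (p - 1) + 1 by ring, Gamma_add_one (by linarith)]
    ring
  have hpow : (1 / (r + s)) ^ (a + p) = (1 / (r + s)) ^ (a + (p - 1)) * (1 / (r + s)) := by
    rw [← rpow_add_one (by positivity)]
    ring_nf
  rw [hnum, integral_rpow_mul_exp_neg_mul_gammaMeasure ha hr (by linarith) hrs,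
    integral_rpow_mul_exp_neg_mul_gammaMeasure ha hr (by linarith) hrs, hΓ, hpow]
  have : 0 < Gamma a := Gamma_pos_of_pos ha
  have : 0 < Gamma (a + (p - 1)) := Gamma_pos_of_pos (by linarith)
  have : 0 < (1 / (r + s)) ^ (a + (p - 1)) := by positivity
  have : 0 < r ^ a := by positivity
  field_simp

end ProbabilityTheory

/-- Linear gamma filter: with X = 1 − U, U ~ Gamma(shape r, rate θ),
Y = m/(1−X), τ = (r−1)/m, the gamma-noise Bayes posterior satisfies
∫ (m/(1−x)) (1−x)^{mt} e^{xξ} π(dx) / ∫ (1−x)^{mt} e^{xξ} π(dx) = (ξ + θ)/(t + τ),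
where π is the law of X. -/
theorem linear_gamma_filter
    (m r θ t ξ : ℝ) (hm : 0 < m) (hr : 1 < r) (hθ : 0 < θ) (ht : 0 < t) (hξ : 0 < ξ) :
    (∫ x, (m / (1 - x)) * (1 - x) ^ (m * t) * Real.exp (x * ξ)
        ∂((ProbabilityTheory.gammaMeasure r θ).map (fun u => 1 - u)))
      / (∫ x, (1 - x) ^ (m * t) * Real.exp (x * ξ)
        ∂((ProbabilityTheory.gammaMeasure r θ).map (fun u => 1 - u)))
      = (ξ + θ) / (t + (r - 1) / m) := by
  have hsub : MeasurableEmbedding fun u : ℝ ↦ 1 - u :=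
    (MeasurableEquiv.subLeft 1).measurableEmbedding
  rw [hsub.integral_map, hsub.integral_map]
  simp only [sub_sub_cancel]
  have hnum : ∀ u, m / u * u ^ (m * t) * exp ((1 - u) * ξ) =
      exp ξ * m * (u⁻¹ * (u ^ (m * t) * exp (-(ξ * u)))) := fun u ↦ by
    rw [show (1 - u) * ξ = ξ + -(ξ * u) by ring, exp_add]
    ring
  have hden : ∀ u, u ^ (m * t) * exp ((1 - u) * ξ) =
      exp ξ * (u ^ (m * t) * exp (-(ξ * u))) := fun u ↦ by
    rw [show (1 - u) * ξ = ξ + -(ξ * u) by ring, exp_add]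
    ring
  simp only [hnum, hden, integral_const_mul]
  rw [mul_assoc, mul_div_mul_left _ _ (exp_pos ξ).ne', mul_div_assoc,
    integral_inv_mul_div_integral_gammaMeasure (by linarith) hθ (by nlinarith) (by linarith)]
  field_simp
  ring
end
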